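/- arXiv:2508.04445 — 4 statements merged into one kernel-verified Lean document; each statement's English description precedes it below -/
import Mathlib

section
/- For all integers k ≥ 1 and t ≥ 2, the function f defined by the recursion f(k,t)=1 if k=1 or t=2, f(k,3)=k, and f(k,t)=f(k,t-2)+f(k-1,t)+1 otherwise, satisfies f(k,t) < 2·C(⌊(t-1)/2⌋+k-1, ⌊(t-1)/2⌋). -/
/-! With `m = ⌊(t-1)/2⌋`, the bound `B(k, t) = 2·C(m + k - 1, m)` obeys Pascal's rule along the
recursion: lowering `t` by two lowers `m` by one, so `B(k, t) = B(k, t-2) + B(k-1, t)`. By induction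
both summands of the recursion are at most `B - 1`, which absorbs the extra `+ 1`. -/

/-- The function `f(k, t)` defined by: `f(k, t) = 1` if `k = 1` or `t = 2`,
`f(k, 3) = k`, and `f(k, t) = f(k, t-2) + f(k-1, t) + 1` for `k ≥ 2`, `t ≥ 4`.
(Values for `k = 0` or `t ≤ 1` are irrelevant junk values.) -/
def f : ℕ → ℕ → ℕ
  | 0, _ => 1
  | 1, _ => 1
  | _+2, 0 => 1
  | _+2, 1 => 1
  | _+2, 2 => 1
  | k+2, 3 => k+2
  | k+2, t+4 => f (k+2) (t+2) + f (k+1) (t+4) + 1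
termination_by k t => k + t
decreasing_by all_goals omega

theorem f_one (t : ℕ) : f 1 t = 1 := by
  rw [f]

theorem f_succ_two (k : ℕ) : f (k + 1) 2 = 1 := by
  cases k <;> rw [f]

theorem f_add_two_three (k : ℕ) : f (k + 2) 3 = k + 2 := by
  rw [f]

theorem f_add_two_add_four (k t : ℕ) :
    f (k + 2) (t + 4) = f (k + 2) (t + 2) + f (k + 1) (t + 4) + 1 := by
  rw [f]

theorem f_succ_add_two_lt : ∀ k t : ℕ,
    f (k + 1) (t + 2) < 2 * ((t + 1) / 2 + k).choose ((t + 1) / 2)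
  | 0, t => by simp [f_one]
  | k + 1, 0 => by simp [f_succ_two]
  | k + 1, 1 => by simp [f_add_two_three]; omega
  | k + 1, t + 2 => by
    set m := (t + 1) / 2
    have hm : (t + 2 + 1) / 2 = m + 1 := by omega
    have hrow : f (k + 2) (t + 2) < 2 * (m + (k + 1)).choose m := f_succ_add_two_lt (k + 1) t
    have hcol : f (k + 1) (t + 4) < 2 * (m + (k + 1)).choose (m + 1) := by
      simpa [hm, add_right_comm _ 1 k, add_assoc] using f_succ_add_two_lt k (t + 2)
    have hpascal : (m + 1 + (k + 1)).choose (m + 1) =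
        (m + (k + 1)).choose m + (m + (k + 1)).choose (m + 1) := by
      rw [add_right_comm, Nat.choose_succ_succ']
    rw [hm, hpascal, f_add_two_add_four]
    omega

theorem f_lt (k t : ℕ) (hk : 1 ≤ k) (ht : 2 ≤ t) :
    f k t < 2 * Nat.choose ((t - 1) / 2 + k - 1) ((t - 1) / 2) := by
  obtain ⟨k, rfl⟩ : ∃ k', k = k' + 1 := ⟨k - 1, by omega⟩
  obtain ⟨t, rfl⟩ : ∃ t', t = t' + 2 := ⟨t - 2, by omega⟩
  simpa using f_succ_add_two_lt k t
end

section
/- Let G be a graph and let S, S' be subsets of V(G). Then there exists a set X ⊆ V(G) with S' ⊆ X such that td(G, S) ≤ td(G, S') + td(G - X, S \ X). -/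
open Classical

variable {V : Type}

/-- Reachability within a vertex subset `s` of the graph `G`. -/
def ReachIn (G : SimpleGraph V) (s : Finset V) (u v : V) : Prop :=
  Relation.ReflTransGen (fun a b => a ∈ s ∧ b ∈ s ∧ G.Adj a b) u v

/-- The induced subgraph of `G` on `s` is (nonempty and) connected. -/
def ConnIn (G : SimpleGraph V) (s : Finset V) : Prop :=
  s.Nonempty ∧ ∀ u ∈ s, ∀ v ∈ s, ReachIn G s u v

/-- The vertex set of the connected component of `v` in the induced subgraph on `s`. -/
noncomputable def compIn (G : SimpleGraph V) (s : Finset V) (v : V) : Finset V :=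
  s.filter (fun u => ReachIn G s v u)

/-- Fuel-based recursion computing the treedepth of the induced subgraph of `G` on `s`
(correct whenever the fuel is at least `s.card`): treedepth of the null graph is `0`;
for a connected graph it is `1 + min_v td(G - v)`; otherwise the max over components. -/
noncomputable def tdAux (G : SimpleGraph V) : ℕ → Finset V → ℕ
  | 0, _ => 0
  | n+1, s =>
    if hs : s = ∅ then 0
    else if ConnIn G s then
      1 + s.inf' (Finset.nonempty_of_ne_empty hs) (fun v => tdAux G n (s.erase v))
    else
      s.sup (fun v => tdAux G n (compIn G s v))

/-- The treedepth of the induced subgraph of `G` on the vertex set `s`. -/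
noncomputable def tdOn (G : SimpleGraph V) (s : Finset V) : ℕ := tdAux G s.card s

/-- The treedepth of a finite graph. -/
noncomputable def td (G : SimpleGraph V) [Fintype V] : ℕ := tdOn G Finset.univ

/-- Fuel-based recursion for the set-restricted treedepth `td(G[s], S)`
(correct whenever the fuel is at least `s.card`): `0` if `S = ∅`; the max over
components `C` of `td(C, S ∩ C)` if the graph is disconnected; and
`1 + min_v td(G - v, S \ {v})` if the graph is connected. -/
noncomputable def tdSAux (G : SimpleGraph V) : ℕ → Finset V → Finset V → ℕ
  | 0, _, _ => 0
  | n+1, s, S =>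
    if S = ∅ then 0
    else if hs : s = ∅ then 0
    else if ConnIn G s then
      1 + s.inf' (Finset.nonempty_of_ne_empty hs)
        (fun v => tdSAux G n (s.erase v) (S.erase v))
    else
      s.sup (fun v => tdSAux G n (compIn G s v) (S ∩ compIn G s v))

/-- The set-restricted treedepth `td(G[s], S)`. -/
noncomputable def tdS (G : SimpleGraph V) (s S : Finset V) : ℕ := tdSAux G s.card s S

/- Induction on the vertex set. If the graph is connected, delete a vertex `v` that is optimal for
`S'`, apply induction to `G - v` and put `v` into `X`. Otherwise apply induction to every component
`C` and let `X` be the union of the sets `X_C`; each component of `C - X_C` is a component of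
`G - X`, so `td(C - X_C, S \ X_C) ≤ td(G - X, S \ X)`. -/

section

variable {G : SimpleGraph V} {s t S S' : Finset V} {u v w : V}

lemma reachIn_mono (h : s ⊆ t) (hr : ReachIn G s u v) : ReachIn G t u v :=
  Relation.ReflTransGen.mono (fun _ _ ⟨ha, hb, hab⟩ => ⟨h ha, h hb, hab⟩) u v hr

lemma reachIn_symm (hr : ReachIn G s u v) : ReachIn G s v u := by
  induction hr with
  | refl => exact .refl
  | tail _ hstep ih => exact .head ⟨hstep.2.1, hstep.1, hstep.2.2.symm⟩ ih

lemma mem_compIn : w ∈ compIn G s v ↔ w ∈ s ∧ ReachIn G s v w := Finset.mem_filter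

lemma compIn_subset : compIn G s v ⊆ s := Finset.filter_subset _ _

lemma mem_compIn_self (hv : v ∈ s) : v ∈ compIn G s v := mem_compIn.2 ⟨hv, .refl⟩

lemma compIn_mono (h : s ⊆ t) : compIn G s v ⊆ compIn G t v := fun _ hw =>
  let ⟨hws, hr⟩ := mem_compIn.1 hw
  mem_compIn.2 ⟨h hws, reachIn_mono h hr⟩

lemma compIn_eq_of_mem (hw : w ∈ compIn G s v) : compIn G s w = compIn G s v := by
  obtain ⟨-, hvw⟩ := mem_compIn.1 hw
  ext u
  simp only [mem_compIn]
  exact and_congr_right fun _ => ⟨hvw.trans, (reachIn_symm hvw).trans⟩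

lemma compIn_eq_self (hc : ConnIn G s) (hv : v ∈ s) : compIn G s v = s :=
  compIn_subset.antisymm fun u hu => mem_compIn.2 ⟨hu, hc.2 v hv u hu⟩

lemma compIn_ssubset (hc : ¬ ConnIn G s) (hv : v ∈ s) : compIn G s v ⊂ s := by
  refine compIn_subset.ssubset_of_ne fun hs => hc ⟨⟨v, hv⟩, fun a ha b hb => ?_⟩
  rw [← hs] at ha hb
  exact (reachIn_symm (mem_compIn.1 ha).2).trans (mem_compIn.1 hb).2

lemma compIn_eq_of_compIn_subset (hts : t ⊆ s) (hcl : ∀ v ∈ t, compIn G s v ⊆ t) (hv : v ∈ t) :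
    compIn G t v = compIn G s v := by
  refine (compIn_mono hts).antisymm fun w hw => ?_
  have hreach : ∀ w, ReachIn G s v w → ReachIn G t v w := by
    intro w hr
    induction hr with
    | refl => exact .refl
    | @tail x y hvx hxy ih =>
      have hx : x ∈ t := hcl v hv (mem_compIn.2 ⟨hxy.1, hvx⟩)
      have hy : y ∈ t := hcl v hv (mem_compIn.2 ⟨hxy.2.1, hvx.tail hxy⟩)
      exact ih.tail ⟨hx, hy, hxy.2.2⟩
  exact mem_compIn.2 ⟨hcl v hv hw, hreach w (mem_compIn.1 hw).2⟩

lemma tdSAux_succ {n : ℕ} (h : s.card ≤ n) : tdSAux G (n + 1) s S = tdSAux G n s S := by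
  induction n generalizing s S with
  | zero => simp [Finset.card_eq_zero.1 (Nat.le_zero.1 h), tdSAux]
  | succ n ih =>
    rw [tdSAux, tdSAux]
    split_ifs with _ _ hc
    · rfl
    · rfl
    · refine congrArg (1 + ·) (Finset.inf'_congr _ rfl fun v hv => ih ?_)
      rw [Finset.card_erase_of_mem hv]
      omega
    · refine Finset.sup_congr rfl fun v hv => ih ?_
      have := Finset.card_lt_card (compIn_ssubset hc hv)
      omega

lemma tdSAux_eq_tdS {n : ℕ} (h : s.card ≤ n) : tdSAux G n s S = tdS G s S := by
  induction n, h using Nat.le_induction with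
  | base => rfl
  | succ n hn ih => rw [tdSAux_succ hn, ih]

@[simp]
lemma tdS_empty_right : tdS G s ∅ = 0 := by
  unfold tdS tdSAux
  split <;> simp

lemma tdS_of_connIn (hS : S.Nonempty) (hc : ConnIn G s) :
    tdS G s S = 1 + s.inf' hc.1 fun v => tdS G (s.erase v) (S.erase v) := by
  obtain ⟨n, hn⟩ := Nat.exists_eq_succ_of_ne_zero hc.1.card_pos.ne'
  rw [tdS, hn, tdSAux, if_neg hS.ne_empty, dif_neg hc.1.ne_empty, if_pos hc]
  refine congrArg (1 + ·) (Finset.inf'_congr _ rfl fun v hv => tdSAux_eq_tdS ?_)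
  rw [Finset.card_erase_of_mem hv, hn]
  rfl

lemma tdS_of_not_connIn (hS : S.Nonempty) (hc : ¬ ConnIn G s) :
    tdS G s S = s.sup fun v => tdS G (compIn G s v) (S ∩ compIn G s v) := by
  rcases s.eq_empty_or_nonempty with rfl | hs
  · simp [tdS, tdSAux]
  obtain ⟨n, hn⟩ := Nat.exists_eq_succ_of_ne_zero hs.card_pos.ne'
  rw [tdS, hn, tdSAux, if_neg hS.ne_empty, dif_neg hs.ne_empty, if_neg hc]
  refine Finset.sup_congr rfl fun v hv => tdSAux_eq_tdS ?_
  have := Finset.card_lt_card (compIn_ssubset hc hv)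
  omega

lemma tdS_eq_sup_compIn (hS : S ⊆ s) :
    tdS G s S = s.sup fun v => tdS G (compIn G s v) (S ∩ compIn G s v) := by
  rcases S.eq_empty_or_nonempty with rfl | hSne
  · simpa using (Finset.sup_bot (α := ℕ) s).symm
  by_cases hc : ConnIn G s
  · have hconst : ∀ v ∈ s, tdS G (compIn G s v) (S ∩ compIn G s v) = tdS G s S := fun v hv => by
      rw [compIn_eq_self hc hv, Finset.inter_eq_left.2 hS]
    rw [Finset.sup_congr rfl hconst, Finset.sup_const hc.1]
  · exact tdS_of_not_connIn hSne hc

lemma tdS_le_one_add_erase (hc : ConnIn G s) (hv : v ∈ s) :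
    tdS G s S ≤ 1 + tdS G (s.erase v) (S.erase v) := by
  rcases S.eq_empty_or_nonempty with rfl | hS
  · simp
  rw [tdS_of_connIn hS hc]
  exact Nat.add_le_add_left (Finset.inf'_le _ hv) 1

lemma exists_tdS_eq_one_add_erase (hS : S.Nonempty) (hc : ConnIn G s) :
    ∃ v ∈ s, tdS G s S = 1 + tdS G (s.erase v) (S.erase v) := by
  obtain ⟨v, hv, hmin⟩ := Finset.exists_mem_eq_inf' hc.1 fun v => tdS G (s.erase v) (S.erase v)
  exact ⟨v, hv, by rw [tdS_of_connIn hS hc, hmin]⟩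

lemma tdS_mono_right (h : S ⊆ S') : tdS G s S ≤ tdS G s S' := by
  induction s using Finset.strongInduction generalizing S S' with
  | H s ih =>
  rcases S.eq_empty_or_nonempty with rfl | hS
  · simp
  have hS' : S'.Nonempty := hS.mono h
  by_cases hc : ConnIn G s
  · rw [tdS_of_connIn hS hc, tdS_of_connIn hS' hc]
    refine Nat.add_le_add_left (Finset.le_inf' _ _ fun v hv => (Finset.inf'_le _ hv).trans ?_) 1
    exact ih _ (Finset.erase_ssubset hv) (Finset.erase_subset_erase v h)
  · rw [tdS_of_not_connIn hS hc, tdS_of_not_connIn hS' hc]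
    refine Finset.sup_le fun v hv => le_trans ?_ (Finset.le_sup hv)
    exact ih _ (compIn_ssubset hc hv) (Finset.inter_subset_inter_right h)

lemma tdS_le_of_compIn_subset (hts : t ⊆ s) (hcl : ∀ v ∈ t, compIn G s v ⊆ t) (hS : S ⊆ t) :
    tdS G t S ≤ tdS G s S := by
  rw [tdS_eq_sup_compIn hS, tdS_eq_sup_compIn (hS.trans hts)]
  refine Finset.sup_le fun v hv => ?_
  rw [compIn_eq_of_compIn_subset hts hcl hv]
  exact Finset.le_sup (f := fun v => tdS G (compIn G s v) (S ∩ compIn G s v)) (hts hv)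

lemma tdS_compIn_sdiff_le (X : Finset V) :
    tdS G (compIn G s v \ X) ((S ∩ compIn G s v) \ X) ≤ tdS G (s \ X) (S \ X) := by
  have hcl : ∀ w ∈ compIn G s v \ X, compIn G (s \ X) w ⊆ compIn G s v \ X := by
    intro w hw z hz
    obtain ⟨hwC, -⟩ := Finset.mem_sdiff.1 hw
    have hzC : z ∈ compIn G s v := compIn_eq_of_mem hwC ▸ compIn_mono Finset.sdiff_subset hz
    exact Finset.mem_sdiff.2 ⟨hzC, (Finset.mem_sdiff.1 (compIn_subset hz)).2⟩
  calc tdS G (compIn G s v \ X) ((S ∩ compIn G s v) \ X)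
      ≤ tdS G (s \ X) ((S ∩ compIn G s v) \ X) :=
        tdS_le_of_compIn_subset (Finset.sdiff_subset_sdiff compIn_subset le_rfl) hcl
          (Finset.sdiff_subset_sdiff Finset.inter_subset_right le_rfl)
    _ ≤ tdS G (s \ X) (S \ X) :=
        tdS_mono_right (Finset.sdiff_subset_sdiff Finset.inter_subset_left le_rfl)

theorem exists_tdS_le_add_tdS_sdiff (s S S' : Finset V) (hS' : S' ⊆ s) :
    ∃ X ⊆ s, S' ⊆ X ∧ tdS G s S ≤ tdS G s S' + tdS G (s \ X) (S \ X) := by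
  induction s using Finset.strongInduction generalizing S S' with
  | H s ih =>
  rcases S'.eq_empty_or_nonempty with rfl | hS'ne
  · exact ⟨∅, Finset.empty_subset _, subset_rfl, by simp⟩
  rcases S.eq_empty_or_nonempty with rfl | hSne
  · exact ⟨S', hS', subset_rfl, by simp⟩
  by_cases hc : ConnIn G s
  · obtain ⟨v, hv, hS'v⟩ := exists_tdS_eq_one_add_erase hS'ne hc
    obtain ⟨X, hXs, hS'X, hX⟩ :=
      ih _ (Finset.erase_ssubset hv) (S.erase v) (S'.erase v) (Finset.erase_subset_erase v hS')
    refine ⟨insert v X, Finset.insert_subset hv (hXs.trans (s.erase_subset v)),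
      Finset.subset_insert_iff.2 hS'X, ?_⟩
    rw [Finset.sdiff_insert, Finset.sdiff_insert, ← Finset.erase_sdiff_comm,
      ← Finset.erase_sdiff_comm, hS'v]
    have := tdS_le_one_add_erase (S := S) hc hv
    omega
  · choose! f _ hS'f hf using fun t (ht : t ⊂ s) =>
      ih t ht (S ∩ t) (S' ∩ t) Finset.inter_subset_right
    set X := s.filter fun x => x ∈ f (compIn G s x)
    have hsdiff : ∀ v, ∀ T ⊆ compIn G s v, T \ f (compIn G s v) = T \ X := by
      intro v T hT
      ext x
      simp only [X, Finset.mem_sdiff, Finset.mem_filter]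
      refine and_congr_right fun hx => ?_
      rw [compIn_eq_of_mem (hT hx)]
      simp [compIn_subset (hT hx)]
    refine ⟨X, Finset.filter_subset _ _, fun x hx => Finset.mem_filter.2 ⟨hS' hx,
      hS'f _ (compIn_ssubset hc (hS' hx)) (Finset.mem_inter.2 ⟨hx, mem_compIn_self (hS' hx)⟩)⟩, ?_⟩
    rw [tdS_of_not_connIn hSne hc, tdS_of_not_connIn hS'ne hc]
    refine Finset.sup_le fun v hv => ?_
    have hfv := hf _ (compIn_ssubset hc hv)
    rw [hsdiff v _ subset_rfl, hsdiff v _ Finset.inter_subset_right] at hfv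
    exact hfv.trans (Nat.add_le_add
      (Finset.le_sup (f := fun v => tdS G (compIn G s v) (S' ∩ compIn G s v)) hv)
      (tdS_compIn_sdiff_le X))

end

theorem tdS_elimination {V : Type} [Fintype V] (G : SimpleGraph V) (S S' : Finset V) :
    ∃ X : Finset V, S' ⊆ X ∧
      tdS G Finset.univ S ≤ tdS G Finset.univ S' + tdS G (Finset.univ \ X) (S \ X) := by
  obtain ⟨X, -, hS'X, hX⟩ :=
    exists_tdS_le_add_tdS_sdiff (G := G) Finset.univ S S' (Finset.subset_univ S')
  exact ⟨X, hS'X, hX⟩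
end

section
/- For every integer t ≥ 3 and every connected P_t-free graph G, the diameter of the block-cut tree of G is at most 2(t-3). -/
open Classical

variable {V : Type}

/-- `B` induces a block-like graph: connected and with no cut vertex
(removing any vertex leaves it connected, when nonempty). -/
def IsBlockSet (G : SimpleGraph V) (B : Finset V) : Prop :=
  ConnIn G B ∧ ∀ v ∈ B, (B.erase v).Nonempty → ConnIn G (B.erase v)

/-- `B` is a block of the induced subgraph of `G` on `s`: a maximal connected
subgraph without a cut vertex. -/
def IsBlock (G : SimpleGraph V) (s B : Finset V) : Prop :=
  B ⊆ s ∧ IsBlockSet G B ∧ ∀ B' : Finset V, B ⊆ B' → B' ⊆ s → IsBlockSet G B' → B' = B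

/-- Fuel-based recursion computing the 2-treedepth of the induced subgraph of `G` on `s`
(correct whenever the fuel is at least `s.card`): `0` for the null graph;
`1 + min_v td₂(G - v)` if the graph is a block; the max over blocks otherwise. -/
noncomputable def td2Aux (G : SimpleGraph V) : ℕ → Finset V → ℕ
  | 0, _ => 0
  | n+1, s =>
    if hs : s = ∅ then 0
    else if IsBlockSet G s then
      1 + s.inf' (Finset.nonempty_of_ne_empty hs) (fun v => td2Aux G n (s.erase v))
    else
      (s.powerset.filter (fun B => IsBlock G s B)).sup (fun B => td2Aux G n B)

/-- The 2-treedepth of the induced subgraph of `G` on `s`. -/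
noncomputable def td2On (G : SimpleGraph V) (s : Finset V) : ℕ := td2Aux G s.card s

/-- The 2-treedepth of a finite graph. -/
noncomputable def td2 (G : SimpleGraph V) [Fintype V] : ℕ := td2On G Finset.univ

/-- `G` contains a path on `m` vertices as a subgraph. -/
def HasPathOn (G : SimpleGraph V) (m : ℕ) : Prop :=
  ∃ p : Fin m → V, Function.Injective p ∧
    ∀ i : Fin m, ∀ h : i.1 + 1 < m, G.Adj (p i) (p ⟨i.1 + 1, h⟩)

/-- `G` contains an induced path on `m` vertices: `m` distinct vertices with
adjacency exactly between consecutive ones. -/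
def HasInducedPathOn (G : SimpleGraph V) (m : ℕ) : Prop :=
  ∃ p : Fin m → V, Function.Injective p ∧
    ∀ i j : Fin m, G.Adj (p i) (p j) ↔ (i.1 + 1 = j.1 ∨ j.1 + 1 = i.1)

/-- `G` is `P_t`-free: it has no induced path on `t` vertices. -/
def PtFree (G : SimpleGraph V) (t : ℕ) : Prop := ¬ HasInducedPathOn G t

/-- `v` is a cut vertex of the finite graph `G`: removing it disconnects two
vertices that were connected in `G`. -/
def IsCutVertex (G : SimpleGraph V) [Fintype V] (v : V) : Prop :=
  ∃ u w : V, u ≠ v ∧ w ≠ v ∧ ReachIn G Finset.univ u w ∧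
    ¬ ReachIn G (Finset.univ.erase v) u w

/-- Vertices of the block-cut tree of `G`: blocks of `G` together with cut vertices of `G`. -/
def BCVert (G : SimpleGraph V) [Fintype V] : Type :=
  {B : Finset V // IsBlock G Finset.univ B} ⊕ {v : V // IsCutVertex G v}

/-- The block-cut tree (forest of blocks) of `G`: a block `B` is adjacent to a
cut vertex `v` exactly when `v ∈ B`. -/
def bcTree (G : SimpleGraph V) [Fintype V] : SimpleGraph (BCVert G) where
  Adj x y := match x, y with
    | Sum.inl B, Sum.inr v => v.1 ∈ B.1
    | Sum.inr v, Sum.inl B => v.1 ∈ B.1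
    | _, _ => False
  symm := ⟨by rintro (B|v) (B'|v') h <;> simp_all⟩
  loopless := ⟨by rintro (B|v) h <;> simp_all⟩

/-!
A cut vertex `v` has neighbours in at least two components of `G - v`, so an induced path
starting at `v` can be prolonged by a neighbour of `v` lying in a component that the rest of
the path avoids. Prolonging a shortest path between two cut vertices `v`, `w` at both ends
gives an induced path on `dist v w + 3` vertices, so `dist v w ≤ t - 4`. Along a shortest
path of length `n` consecutive edges lie in blocks that are equal or meet in a cut vertex,
so the block-cut tree distance of `v` and `w` is at most `2 n`. Finally, once the block-cut
tree has two nodes, each of them is a cut vertex or a block containing one, which gives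
`1 + 2 (t - 4) + 1 = 2 (t - 3)`.
-/

open Finset

variable {G : SimpleGraph V}

namespace ReachIn

variable {s s' : Finset V} {u v w : V}

lemma symm (h : ReachIn G s u v) : ReachIn G s v u := by
  induction h with
  | refl => exact .refl
  | tail _ hbc ih => exact Relation.ReflTransGen.head ⟨hbc.2.1, hbc.1, hbc.2.2.symm⟩ ih

lemma trans (h : ReachIn G s u v) (h' : ReachIn G s v w) : ReachIn G s u w :=
  Relation.ReflTransGen.trans h h'

lemma single (hu : u ∈ s) (hv : v ∈ s) (h : G.Adj u v) : ReachIn G s u v :=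
  Relation.ReflTransGen.single ⟨hu, hv, h⟩

lemma mono (hs : s ⊆ s') (h : ReachIn G s u v) : ReachIn G s' u v := by
  induction h with
  | refl => exact .refl
  | tail _ hab ih => exact ih.tail ⟨hs hab.1, hs hab.2.1, hab.2.2⟩

lemma of_walk {p : G.Walk u v} (hp : ∀ w ∈ p.support, w ∈ s) : ReachIn G s u v := by
  induction p with
  | nil => exact .refl
  | cons h q ih =>
    simp only [SimpleGraph.Walk.support_cons, List.mem_cons, forall_eq_or_imp] at hp
    exact (single hp.1 (hp.2 _ q.start_mem_support) h).trans (ih hp.2)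

lemma exists_isPath (h : ReachIn G s u v) (hu : u ∈ s) :
    ∃ p : G.Walk u v, p.IsPath ∧ ∀ w ∈ p.support, w ∈ s := by
  suffices ∃ p : G.Walk u v, ∀ w ∈ p.support, w ∈ s by
    obtain ⟨p, hp⟩ := this
    exact ⟨p.bypass, p.bypass_isPath, fun w hw => hp w (p.support_bypass_subset_support hw)⟩
  induction h with
  | refl => exact ⟨.nil, by simpa using hu⟩
  | tail _ hbc ih =>
    obtain ⟨p, hp⟩ := ih
    refine ⟨p.concat hbc.2.2, fun w hw => ?_⟩
    rw [SimpleGraph.Walk.support_concat, List.mem_append,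
      List.mem_singleton] at hw
    exact hw.elim (hp w) (fun hw => hw ▸ hbc.2.1)

end ReachIn

lemma connIn_singleton (u : V) : ConnIn G {u} :=
  ⟨singleton_nonempty u, fun _ hx _ hy => by
    rw [mem_singleton.1 hx, mem_singleton.1 hy]
    exact .refl⟩

namespace ConnIn

variable {A C : Finset V}

lemma of_subset (hA : ConnIn G A) (hAC : A ⊆ C) (h : ∀ y ∈ C, ∃ z ∈ A, ReachIn G C y z) :
    ConnIn G C := by
  obtain ⟨a, ha⟩ := hA.1
  have hto : ∀ y ∈ C, ReachIn G C y a := fun y hy => by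
    obtain ⟨z, hz, hyz⟩ := h y hy
    exact hyz.trans ((hA.2 z hz a ha).mono hAC)
  exact ⟨⟨a, hAC ha⟩, fun y hy y' hy' => (hto y hy).trans (hto y' hy').symm⟩

lemma union (hA : ConnIn G A) (hC : ConnIn G C) {z : V} (hzA : z ∈ A) (hzC : z ∈ C) :
    ConnIn G (A ∪ C) :=
  hA.of_subset subset_union_left fun y hy => by
    rcases mem_union.1 hy with hy | hy
    · exact ⟨y, hy, .refl⟩
    · exact ⟨z, hzA, (hC.2 y hy z hzC).mono subset_union_right⟩

end ConnIn

namespace SimpleGraph.Walk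

variable {u v : V}

lemma connIn_support (p : G.Walk u v) : ConnIn G p.support.toFinset :=
  (connIn_singleton u).of_subset (by simp) fun y hy =>
    ⟨u, mem_singleton_self u, (ReachIn.of_walk (p := p.takeUntil y (by simpa using hy))
      fun w hw => by simpa using p.support_takeUntil_subset_support _ hw).symm⟩

lemma IsPath.reachIn_erase_start_or_end {p : G.Walk u v} (hp : p.IsPath) {x y : V}
    (hy : y ∈ p.support) (hyx : y ≠ x) :
    (u ≠ x ∧ ReachIn G (p.support.toFinset.erase x) y u) ∨
      (v ≠ x ∧ ReachIn G (p.support.toFinset.erase x) y v) := by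
  have hsplit : ((p.takeUntil y hy).append (p.dropUntil y hy)).IsPath := by
    rwa [p.take_spec hy]
  by_cases hx : x ∈ (p.takeUntil y hy).support
  · have hx' : x ∉ (p.dropUntil y hy).support := fun h =>
      hsplit.ne_of_mem_support_of_append hyx.symm hx h rfl
    refine Or.inr ⟨fun h => hx' (h ▸ end_mem_support _),
      ReachIn.of_walk (p := p.dropUntil y hy) fun w hw => ?_⟩
    exact mem_erase.2
      ⟨fun h => hx' (h ▸ hw), by simpa using p.support_dropUntil_subset_support _ hw⟩
  · refine Or.inl ⟨fun h => hx (h ▸ start_mem_support _),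
      (ReachIn.of_walk (p := p.takeUntil y hy) fun w hw => ?_).symm⟩
    exact mem_erase.2
      ⟨fun h => hx (h ▸ hw), by simpa using p.support_takeUntil_subset_support _ hw⟩

end SimpleGraph.Walk

namespace IsBlockSet

variable {B B' : Finset V}

lemma connIn_erase (hB : IsBlockSet G B) (x : V) (hne : (B.erase x).Nonempty) :
    ConnIn G (B.erase x) := by
  by_cases hx : x ∈ B
  · exact hB.2 x hx hne
  · rw [erase_eq_of_notMem hx]
    exact hB.1

lemma pair {a b : V} (h : G.Adj a b) : IsBlockSet G {a, b} := by
  have hconn : ConnIn G {a, b} := (connIn_singleton a).of_subset (by simp) fun y hy => by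
    rcases mem_insert.1 hy with rfl | hy
    · exact ⟨y, mem_singleton_self y, .refl⟩
    · rw [mem_singleton.1 hy]
      exact ⟨a, mem_singleton_self a, (ReachIn.single (by simp) (by simp) h).symm⟩
  refine ⟨hconn, fun x hx _ => ?_⟩
  rcases mem_insert.1 hx with rfl | hx
  · rw [erase_insert (by simpa using h.ne)]
    exact connIn_singleton b
  · rw [mem_singleton.1 hx, pair_comm, erase_insert (by simpa using h.ne.symm)]
    exact connIn_singleton a

lemma union_union_support (hB : IsBlockSet G B) (hB' : IsBlockSet G B') {u a b : V}
    (hu : u ∈ B) (hu' : u ∈ B') {p : G.Walk a b} (hp : p.IsPath) (ha : a ∈ B) (hb : b ∈ B')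
    (hpu : u ∉ p.support) : IsBlockSet G (B ∪ B' ∪ p.support.toFinset) := by
  have haW : a ∈ p.support.toFinset := by simp
  have hbW : b ∈ p.support.toFinset := by simp
  refine ⟨(hB.1.union hB'.1 hu hu').union p.connIn_support (mem_union_left _ ha) haW,
    fun x _ _ => ?_⟩
  by_cases hxu : x = u
  · subst hxu
    have hax : a ∈ B.erase x := mem_erase.2 ⟨fun h => hpu (h ▸ p.start_mem_support), ha⟩
    have hbx : b ∈ B'.erase x := mem_erase.2 ⟨fun h => hpu (h ▸ p.end_mem_support), hb⟩
    have hconn := ((hB.connIn_erase x ⟨a, hax⟩).union p.connIn_support hax haW).union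
      (hB'.connIn_erase x ⟨b, hbx⟩) (mem_union_right _ hbW) hbx
    convert hconn using 1
    ext y
    simp only [mem_erase, mem_union, List.mem_toFinset]
    grind
  · have hux : u ≠ x := Ne.symm hxu
    refine ((hB.connIn_erase x ⟨u, mem_erase.2 ⟨hux, hu⟩⟩).union
      (hB'.connIn_erase x ⟨u, mem_erase.2 ⟨hux, hu'⟩⟩) (mem_erase.2 ⟨hux, hu⟩)
      (mem_erase.2 ⟨hux, hu'⟩)).of_subset ?_ fun y hy => ?_
    · intro y
      simp only [mem_erase, mem_union]
      tauto
    obtain ⟨hyx, hy⟩ := mem_erase.1 hy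
    have hW : p.support.toFinset.erase x ⊆ (B ∪ B' ∪ p.support.toFinset).erase x :=
      erase_subset_erase x subset_union_right
    rcases mem_union.1 hy with hy | hyW
    · exact ⟨y, by simp only [mem_union, mem_erase] at hy ⊢; tauto, .refl⟩
    rcases hp.reachIn_erase_start_or_end (by simpa using hyW) hyx with ⟨hax, h⟩ | ⟨hbx, h⟩
    · exact ⟨a, mem_union_left _ (mem_erase.2 ⟨hax, ha⟩), h.mono hW⟩
    · exact ⟨b, mem_union_right _ (mem_erase.2 ⟨hbx, hb⟩), h.mono hW⟩

end IsBlockSet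

section Blocks

variable [Fintype V] {B B' : Finset V}

lemma IsBlockSet.exists_isBlock (hB : IsBlockSet G B) : ∃ C, B ⊆ C ∧ IsBlock G univ C := by
  obtain ⟨C, hC, hmax⟩ :=
    exists_max_image (univ.filter fun C => B ⊆ C ∧ IsBlockSet G C) card ⟨B, by simp [hB]⟩
  simp only [mem_filter, mem_univ, true_and] at hC hmax
  exact ⟨C, hC.1, subset_univ C, hC.2, fun C' hCC' _ hC' =>
    (eq_of_subset_of_card_le hCC' (hmax C' ⟨hC.1.trans hCC', hC'⟩)).symm⟩

lemma exists_isBlock_of_adj {a b : V} (h : G.Adj a b) :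
    ∃ B, IsBlock G univ B ∧ a ∈ B ∧ b ∈ B := by
  obtain ⟨C, hsub, hC⟩ := (IsBlockSet.pair h).exists_isBlock
  exact ⟨C, hC, hsub (by simp), hsub (by simp)⟩

namespace IsBlock

lemma exists_mem_notMem (hB : IsBlock G univ B) (hB' : IsBlock G univ B') (hne : B ≠ B') :
    ∃ x ∈ B, x ∉ B' := by
  by_contra! h
  exact hne (hB.2.2 B' h (subset_univ _) hB'.2.1).symm

lemma isCutVertex_of_mem (hB : IsBlock G univ B) (hB' : IsBlock G univ B') (hne : B ≠ B')
    {u : V} (hu : u ∈ B) (hu' : u ∈ B') : IsCutVertex G u := by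
  obtain ⟨b, hbB, hbB'⟩ := hB.exists_mem_notMem hB' hne
  obtain ⟨b', hb'B', hb'B⟩ := hB'.exists_mem_notMem hB hne.symm
  have hbu : b ≠ u := fun h => hbB' (h ▸ hu')
  have hbb' : ReachIn G univ b b' := ((hB.2.1.1.2 b hbB u hu).mono (subset_univ _)).trans
    ((hB'.2.1.1.2 u hu' b' hb'B').mono (subset_univ _))
  refine ⟨b, b', hbu, fun h => hb'B (h ▸ hu), hbb', fun hre => ?_⟩
  -- otherwise `B`, `B'` and a `b`–`b'` path avoiding `u` form a block set larger than `B`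
  obtain ⟨p, hp, hps⟩ := hre.exists_isPath (mem_erase.2 ⟨hbu, mem_univ _⟩)
  have hT := hB.2.1.union_union_support hB'.2.1 hu hu' hp hbB hb'B'
    fun h => (mem_erase.1 (hps u h)).1 rfl
  have hTB := hB.2.2 _ (subset_union_left.trans subset_union_left) (subset_univ _) hT
  exact hb'B (hTB ▸ mem_union_left _ (mem_union_right _ hb'B'))

lemma exists_isCutVertex_mem (hconn : G.Connected) (hB : IsBlock G univ B) {x : V}
    (hx : x ∉ B) : ∃ c ∈ B, IsCutVertex G c := by
  obtain ⟨b, hb⟩ := hB.2.1.1.1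
  obtain ⟨p⟩ := hconn.preconnected x b
  induction p with
  | nil => exact absurd hb hx
  | @cons x y _ h q ih =>
    by_cases hy : y ∈ B
    · obtain ⟨E, hE, hxE, hyE⟩ := exists_isBlock_of_adj h
      exact ⟨y, hy, hE.isCutVertex_of_mem hB (fun h => hx (h ▸ hxE)) hyE hy⟩
    · exact ih hy hb

end IsBlock

end Blocks

def IsInducedPath (G : SimpleGraph V) {m : ℕ} (p : Fin m → V) : Prop :=
  Function.Injective p ∧ ∀ i j, G.Adj (p i) (p j) ↔ (i.1 + 1 = j.1 ∨ j.1 + 1 = i.1)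

namespace IsInducedPath

variable {m : ℕ}

lemma castLE {p : Fin m → V} (hp : IsInducedPath G p) {k : ℕ} (hk : k ≤ m) :
    IsInducedPath G (p ∘ Fin.castLE hk) :=
  ⟨hp.1.comp (Fin.castLE_injective hk), fun i j => by
    rw [Function.comp_apply, Function.comp_apply, hp.2, Fin.val_castLE, Fin.val_castLE]⟩

lemma rev {p : Fin m → V} (hp : IsInducedPath G p) : IsInducedPath G (p ∘ Fin.rev) :=
  ⟨hp.1.comp Fin.rev_injective, fun i j => by
    rw [Function.comp_apply, Function.comp_apply, hp.2, Fin.val_rev, Fin.val_rev]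
    omega⟩

lemma cons {p : Fin (m + 1) → V} (hp : IsInducedPath G p) {y : V} (hy : G.Adj y (p 0))
    (hfar : ∀ i ≠ 0, ¬ G.Adj y (p i) ∧ y ≠ p i) :
    IsInducedPath G (Fin.cons y p : Fin (m + 2) → V) := by
  have hy' : ∀ i, G.Adj y (p i) ↔ i.1 = 0 := fun i => by
    by_cases hi : i = 0
    · simp [hi, hy]
    · simpa [hi, Fin.ext_iff] using (hfar i hi).1
  refine ⟨Fin.cons_injective_iff.2 ⟨?_, hp.1⟩, fun i j => ?_⟩
  · rintro ⟨i, rfl⟩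
    by_cases hi : i = 0
    · exact hy.ne (by rw [hi])
    · exact (hfar i hi).2 rfl
  cases i using Fin.cases <;> cases j using Fin.cases <;>
    simp only [Fin.cons_zero, Fin.cons_succ, Fin.val_zero, Fin.val_succ]
  · simp
  · rw [hy']; omega
  · rw [G.adj_comm, hy']; omega
  · rw [hp.2]; omega

lemma reachIn {p : Fin m → V} (hp : IsInducedPath G p) {s : Finset V}
    {i j : Fin m} (hij : i ≤ j) (hs : ∀ k, i ≤ k → k ≤ j → p k ∈ s) :
    ReachIn G s (p i) (p j) := by
  obtain ⟨d, hd⟩ : ∃ d, j.1 = i.1 + d := ⟨j.1 - i.1, by omega⟩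
  induction d generalizing j with
  | zero => rw [show j = i from Fin.ext (by omega)]; exact .refl
  | succ d ih =>
    set j' : Fin m := ⟨i.1 + d, by omega⟩
    have hij' : i ≤ j' := Fin.le_def.2 (by simp [j'])
    have hj'j : j' ≤ j := Fin.le_def.2 (by simp [j']; omega)
    have hadj : G.Adj (p j') (p j) := (hp.2 j' j).2 (Or.inl (by simp [j']; omega))
    exact (ih hij' (fun k hk hk' => hs k hk (hk'.trans hj'j)) rfl).trans
      (.single (hs j' hij' hj'j) (hs j hij le_rfl) hadj)

end IsInducedPath

lemma PtFree.lt_of_isInducedPath {t m : ℕ} (hfree : PtFree G t) {p : Fin m → V}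
    (hp : IsInducedPath G p) : m < t := by
  by_contra! h
  exact hfree ⟨_, hp.castLE h⟩

namespace SimpleGraph.Walk

variable {u v : V}

lemma dist_getVert_le (hconn : G.Connected) (p : G.Walk u v) {i j : ℕ} (hij : i ≤ j)
    (hj : j ≤ p.length) : G.dist (p.getVert i) (p.getVert j) ≤ j - i := by
  induction j, hij using Nat.le_induction with
  | base => simp
  | succ j hij ih =>
    calc G.dist (p.getVert i) (p.getVert (j + 1))
        ≤ G.dist (p.getVert i) (p.getVert j) + G.dist (p.getVert j) (p.getVert (j + 1)) :=
          hconn.dist_triangle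
      _ ≤ (j - i) + 1 :=
          add_le_add (ih (by omega)) (dist_eq_one_iff_adj.2 (p.adj_getVert_succ (by omega))).le
      _ = j + 1 - i := by omega

lemma dist_getVert_eq (hconn : G.Connected) {p : G.Walk u v} (hp : p.length = G.dist u v)
    {i j : ℕ} (hij : i ≤ j) (hj : j ≤ p.length) :
    G.dist (p.getVert i) (p.getVert j) = j - i := by
  refine le_antisymm (p.dist_getVert_le hconn hij hj) ?_
  have hlen : p.length ≤ i + G.dist (p.getVert i) (p.getVert j) + (p.length - j) :=
    calc p.length = G.dist u v := hp
      _ ≤ G.dist u (p.getVert i) + G.dist (p.getVert i) (p.getVert j) +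
            G.dist (p.getVert j) v :=
        hconn.dist_triangle.trans (add_le_add_left hconn.dist_triangle _)
      _ ≤ i + G.dist (p.getVert i) (p.getVert j) + (p.length - j) := by
        gcongr
        · simpa using p.dist_getVert_le hconn (Nat.zero_le i) (hij.trans hj)
        · simpa using p.dist_getVert_le hconn hj le_rfl
  omega

lemma isInducedPath_getVert (hconn : G.Connected) {p : G.Walk u v}
    (hp : p.length = G.dist u v) :
    IsInducedPath G (fun i : Fin (p.length + 1) => p.getVert i) := by
  have hdist : ∀ i j : Fin (p.length + 1), G.dist (p.getVert i) (p.getVert j) =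
      max i.1 j.1 - min i.1 j.1 := fun i j => by
    rcases le_total i.1 j.1 with h | h
    · rw [p.dist_getVert_eq hconn hp h (by omega), max_eq_right h, min_eq_left h]
    · rw [dist_comm, p.dist_getVert_eq hconn hp h (by omega), max_eq_left h, min_eq_right h]
  refine ⟨fun i j hij => Fin.ext ?_, fun i j => ?_⟩
  · have := hdist i j
    dsimp only at hij
    rw [hij, dist_self] at this
    omega
  · rw [← dist_eq_one_iff_adj, hdist]
    omega

end SimpleGraph.Walk

section CutVertex

variable [Fintype V] {v : V}

lemma SimpleGraph.Walk.exists_adj_reachIn_erase {z : V} (p : G.Walk z v) (hz : z ≠ v) :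
    ∃ y, G.Adj v y ∧ ReachIn G (univ.erase v) z y := by
  induction p with
  | nil => exact absurd rfl hz
  | @cons z z' w h q ih =>
    by_cases hz' : z' = w
    · subst hz'
      exact ⟨z, h.symm, .refl⟩
    · obtain ⟨y, hy, hz'y⟩ := ih hz'
      exact ⟨y, hy, (ReachIn.single (by simpa using hz) (by simpa using hz') h).trans hz'y⟩

namespace IsCutVertex

lemma exists_adj_not_reachIn (hconn : G.Connected) (hv : IsCutVertex G v) (x : V) :
    ∃ y, G.Adj v y ∧ ¬ ReachIn G (univ.erase v) y x := by
  obtain ⟨u, w, hu, hw, -, hsep⟩ := hv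
  obtain ⟨y, hy, huy⟩ := (hconn u v).some.exists_adj_reachIn_erase hu
  obtain ⟨y', hy', hwy'⟩ := (hconn w v).some.exists_adj_reachIn_erase hw
  by_cases hyx : ReachIn G (univ.erase v) y x
  · exact ⟨y', hy', fun hy'x => hsep (((huy.trans hyx).trans hy'x.symm).trans hwy'.symm)⟩
  · exact ⟨y, hy, hyx⟩

lemma exists_isInducedPath_cons (hconn : G.Connected) (hv : IsCutVertex G v) {m : ℕ}
    {p : Fin (m + 1) → V} (hp : IsInducedPath G p) (hp0 : p 0 = v) :
    ∃ y, IsInducedPath G (Fin.cons y p : Fin (m + 2) → V) := by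
  obtain ⟨y, hy, hyr⟩ := hv.exists_adj_not_reachIn hconn (p (Fin.last m))
  have hne : ∀ i ≠ 0, p i ∈ univ.erase v := fun i hi =>
    mem_erase.2 ⟨fun h => hi (hp.1 (h.trans hp0.symm)), mem_univ _⟩
  have hreach : ∀ i ≠ 0, ReachIn G (univ.erase v) (p i) (p (Fin.last m)) := fun i hi =>
    hp.reachIn (Fin.le_last i) fun k hik _ =>
      hne k fun hk => hi (le_antisymm (hk ▸ hik) i.zero_le)
  refine ⟨y, hp.cons (hp0 ▸ hy.symm) fun i hi => ⟨fun hadj => hyr ?_, fun he => hyr ?_⟩⟩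
  · have hy : y ∈ univ.erase v := mem_erase.2 ⟨hy.ne', mem_univ _⟩
    exact (ReachIn.single hy (hne i hi) hadj).trans (hreach i hi)
  · exact he ▸ hreach i hi

lemma dist_add_four_le (hconn : G.Connected) {t : ℕ} (hfree : PtFree G t) {w : V}
    (hv : IsCutVertex G v) (hw : IsCutVertex G w) : G.dist v w + 4 ≤ t := by
  obtain ⟨p, hp⟩ := hconn.exists_walk_length_eq_dist v w
  obtain ⟨y, hy⟩ :=
    hv.exists_isInducedPath_cons hconn (p.isInducedPath_getVert hconn hp) (by simp)
  obtain ⟨y', hy'⟩ := hw.exists_isInducedPath_cons hconn hy.rev (by simp [← Fin.succ_last])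
  have := hfree.lt_of_isInducedPath hy'
  omega

end IsCutVertex

end CutVertex

section BlockCutTree

variable [Fintype V]

lemma bcTree_edist_inl_inl_le_two {B B' : {B : Finset V // IsBlock G univ B}} {u : V}
    (hu : u ∈ B.1) (hu' : u ∈ B'.1) : (bcTree G).edist (.inl B) (.inl B') ≤ 2 := by
  obtain rfl | hne := eq_or_ne B B'
  · exact SimpleGraph.edist_self.trans_le zero_le
  have hc := B.2.isCutVertex_of_mem B'.2 (Subtype.coe_injective.ne hne) hu hu'
  calc (bcTree G).edist (.inl B) (.inl B')
      ≤ (bcTree G).edist (.inl B) (.inr ⟨u, hc⟩) +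
          (bcTree G).edist (.inr ⟨u, hc⟩) (.inl B') := SimpleGraph.edist_triangle
    _ ≤ 1 + 1 := add_le_add (SimpleGraph.edist_eq_one_iff_adj.2 hu).le
        (SimpleGraph.edist_eq_one_iff_adj.2 hu').le
    _ = 2 := one_add_one_eq_two

lemma SimpleGraph.Walk.exists_bcTree_edist_inl_le {u w : V} (p : G.Walk u w)
    (B : {B : Finset V // IsBlock G univ B}) (hu : u ∈ B.1) :
    ∃ B' : {B : Finset V // IsBlock G univ B}, w ∈ B'.1 ∧
      (bcTree G).edist (.inl B) (.inl B') ≤ 2 * p.length := by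
  induction p generalizing B with
  | nil => exact ⟨B, hu, SimpleGraph.edist_self.trans_le zero_le⟩
  | cons h q ih =>
    obtain ⟨E, hE, hxE, hyE⟩ := exists_isBlock_of_adj h
    obtain ⟨B', hw, hd⟩ := ih ⟨E, hE⟩ hyE
    refine ⟨B', hw, ?_⟩
    calc (bcTree G).edist (.inl B) (.inl B')
        ≤ (bcTree G).edist (.inl B) (.inl ⟨E, hE⟩) +
            (bcTree G).edist (.inl ⟨E, hE⟩) (.inl B') := SimpleGraph.edist_triangle
      _ ≤ 2 + 2 * q.length := add_le_add (bcTree_edist_inl_inl_le_two hu hxE) hd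
      _ = 2 * (q.cons h).length := by rw [SimpleGraph.Walk.length_cons]; push_cast; ring

lemma bcTree_edist_inr_inr_le (hconn : G.Connected) (c c' : {v : V // IsCutVertex G v}) :
    (bcTree G).edist (.inr c) (.inr c') ≤ 2 * G.dist c c' := by
  obtain rfl | hne := eq_or_ne c c'
  · exact SimpleGraph.edist_self.trans_le zero_le
  obtain ⟨p, hp⟩ := hconn.exists_walk_length_eq_dist c.1 c'.1
  have hnil : ¬ p.Nil := fun h => hne (Subtype.ext h.eq)
  obtain ⟨E, hE, hcE, hsE⟩ := exists_isBlock_of_adj (p.adj_snd hnil)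
  obtain ⟨B', hc', hd⟩ := p.tail.exists_bcTree_edist_inl_le ⟨E, hE⟩ hsE
  calc (bcTree G).edist (.inr c) (.inr c')
      ≤ (bcTree G).edist (.inr c) (.inl ⟨E, hE⟩) +
          (bcTree G).edist (.inl ⟨E, hE⟩) (.inl B') + (bcTree G).edist (.inl B') (.inr c') :=
        SimpleGraph.edist_triangle.trans (add_le_add_left SimpleGraph.edist_triangle _)
    _ ≤ 1 + 2 * p.tail.length + 1 := by
        gcongr
        · exact (SimpleGraph.edist_eq_one_iff_adj.2 hcE).le
        · exact (SimpleGraph.edist_eq_one_iff_adj.2 hc').le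
    _ = 2 * G.dist c c' := by
        rw [← hp, ← p.length_tail_add_one hnil]; push_cast; ring

lemma exists_bcTree_edist_inr_le_one (hconn : G.Connected) {X Y : BCVert G} (hXY : X ≠ Y) :
    ∃ c : {v : V // IsCutVertex G v}, (bcTree G).edist X (.inr c) ≤ 1 := by
  rcases X with B | c
  · suffices ∃ c ∈ B.1, IsCutVertex G c by
      obtain ⟨c, hcB, hc⟩ := this
      exact ⟨⟨c, hc⟩, (SimpleGraph.edist_eq_one_iff_adj.2 hcB).le⟩
    rcases Y with B' | w
    · obtain ⟨x, hxB', hxB⟩ :=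
        B'.2.exists_mem_notMem B.2 (Subtype.coe_injective.ne fun h => hXY (congrArg _ h.symm))
      exact B.2.exists_isCutVertex_mem hconn hxB
    · by_cases hw : w.1 ∈ B.1
      · exact ⟨w.1, hw, w.2⟩
      · exact B.2.exists_isCutVertex_mem hconn hw
  · exact ⟨c, SimpleGraph.edist_self.trans_le zero_le⟩

end BlockCutTree

theorem bcTree_diam_le_general {V : Type} [Fintype V] (G : SimpleGraph V) (t : ℕ)
    (hconn : G.Connected) (hfree : PtFree G t) :
    (bcTree G).diam ≤ 2 * (t - 3) := by
  refine ENat.toNat_le_of_le_natCast (SimpleGraph.ediam_le_of_edist_le fun X Y => ?_)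
  obtain rfl | hXY := eq_or_ne X Y
  · exact SimpleGraph.edist_self.trans_le zero_le
  obtain ⟨c, hc⟩ := exists_bcTree_edist_inr_le_one hconn hXY
  obtain ⟨c', hc'⟩ := exists_bcTree_edist_inr_le_one hconn hXY.symm
  have hlen := c.2.dist_add_four_le hconn hfree c'.2
  calc (bcTree G).edist X Y
      ≤ (bcTree G).edist X (.inr c) + (bcTree G).edist (.inr c) (.inr c') +
          (bcTree G).edist (.inr c') Y :=
        SimpleGraph.edist_triangle.trans (add_le_add_left SimpleGraph.edist_triangle _)
    _ ≤ 1 + 2 * G.dist c c' + 1 := by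
        gcongr
        · exact bcTree_edist_inr_inr_le hconn c c'
        · exact SimpleGraph.edist_comm.trans_le hc'
    _ ≤ ↑(2 * (t - 3)) := by exact_mod_cast (by omega : 1 + 2 * G.dist c c' + 1 ≤ 2 * (t - 3))

theorem bcTree_diam_le {V : Type} [Fintype V] (G : SimpleGraph V) (t : ℕ) (ht : 3 ≤ t)
    (hconn : G.Connected) (hfree : PtFree G t) :
    (bcTree G).diam ≤ 2 * (t - 3) :=
  bcTree_diam_le_general G t hconn hfree
end

section
/- For all positive integers r and k, the graph G_{r,k} (defined recursively by: G_{r,1} is a single vertex, G_{1,k} = K_k, and G_{r,k} obtained from G_{r-1,k} by attaching to each vertex a fully-joined disjoint copy of G_{r,k-1}) contains no induced path on 2r+1 vertices. -/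
open Classical

variable {V : Type}

/-- The graph of type `a(H, H')`: obtained from `H` by adding, for each vertex
`a` of `H`, a disjoint copy `{a} × B` of `H'` fully joined to `a`. -/
def typeA {A B : Type} (H : SimpleGraph A) (H' : SimpleGraph B) :
    SimpleGraph (A ⊕ A × B) where
  Adj x y := match x, y with
    | Sum.inl a, Sum.inl a' => H.Adj a a'
    | Sum.inl a, Sum.inr p => a = p.1
    | Sum.inr p, Sum.inl a => p.1 = a
    | Sum.inr p, Sum.inr q => p.1 = q.1 ∧ H'.Adj p.2 q.2
  symm := by
    constructor
    rintro (a|p) (a'|q) h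
    · exact H.adj_symm h
    · exact h.symm
    · exact h.symm
    · exact ⟨h.1.symm, H'.adj_symm h.2⟩
  loopless := by
    constructor
    rintro (a|p) h
    · exact H.irrefl h
    · exact H'.irrefl h.2

/-- One row-step of the recursive construction: given the previous family
`prev k = G_{r, k+1}`, builds `G_{r+1, k+1}` for all `k` (index shifted by one:
`GrkRow prev 0` is the one-vertex graph `G_{r+1, 1}`, and `GrkRow prev (k+1)`
is obtained from `prev (k+1) = G_{r, k+2}` by attaching to each of its vertices
a fully-joined disjoint copy of `GrkRow prev k = G_{r+1, k+1}`). -/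
def GrkRow (prev : ℕ → (W : Type) × SimpleGraph W) : ℕ → (W : Type) × SimpleGraph W
  | 0 => ⟨PUnit, ⊥⟩
  | k+1 => ⟨(prev (k+1)).1 ⊕ ((prev (k+1)).1 × (GrkRow prev k).1),
      typeA (prev (k+1)).2 (GrkRow prev k).2⟩

/-- The graph `G_{r+1, k+1}` (indices shifted by one): `GrkS 0 k` is the complete
graph `K_{k+1}`, `GrkS (r+1) 0` is a single vertex, and `GrkS (r+1) (k+1)` is
obtained from `GrkS r (k+1)` by attaching to each vertex a fully-joined disjoint
copy of `GrkS (r+1) k`. -/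
def GrkS : ℕ → ℕ → (W : Type) × SimpleGraph W
  | 0 => fun k => ⟨Fin (k+1), ⊤⟩
  | r+1 => GrkRow (GrkS r)

noncomputable def fintypeRow (prev : ℕ → (W : Type) × SimpleGraph W)
    (hp : ∀ k, Fintype (prev k).1) : ∀ k, Fintype (GrkRow prev k).1
  | 0 => inferInstanceAs (Fintype PUnit)
  | k+1 =>
    letI := hp (k+1)
    letI := fintypeRow prev hp k
    inferInstanceAs (Fintype (_ ⊕ _ × _))

noncomputable def fintypeGrk : ∀ r k, Fintype (GrkS r k).1
  | 0 => fun k => inferInstanceAs (Fintype (Fin (k+1)))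
  | r+1 => fintypeRow (GrkS r) (fintypeGrk r)

/-!
If `H` has no induced `P_{n+1}` and `H'` no induced `P_{n+3}`, then `typeA H H'` has no induced
`P_{n+3}`. A path can leave a copy of `H'` only through the copy's anchor, so an induced path in
`typeA H H'` either lies inside one copy (impossible, as `H'` has no induced `P_{n+3}`) or
contains the anchor of each of its copy vertices. A copy vertex adjacent to its anchor on the
path cannot be an interior vertex (its other neighbour would also be adjacent to the anchor), so
the `n + 1` interior vertices all lie in `H`. Since `G_{r,k} = typeA G_{r-1,k} G_{r,k-1}`,
induction with `n + 3 = 2r + 1` gives the theorem.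
-/

open SimpleGraph

lemma SimpleGraph.Preconnected.forall_of_adj_closed {W : Type*} {G : SimpleGraph W}
    (hG : G.Preconnected) {P : W → Prop} (hP : ∀ x y, G.Adj x y → P x → P y) {w : W}
    (hw : P w) (v : W) : P v := by
  induction (reachable_iff_reflTransGen w v).1 (hG w v) with
  | refl => exact hw
  | tail _ hadj ih => exact hP _ _ hadj ih

lemma SimpleGraph.Embedding.nonempty_of_range_subset {U W X : Type*} {K : SimpleGraph U}
    {H : SimpleGraph W} {G : SimpleGraph X} (f : H ↪g G) (e : K ↪g G)
    (h : Set.range e ⊆ Set.range f) : Nonempty (K ↪g H) := by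
  choose g hg using fun k => h ⟨k, rfl⟩
  refine ⟨⟨⟨g, fun x y hxy => e.injective (by rw [← hg x, ← hg y, hxy])⟩, fun {x y} => ?_⟩⟩
  change H.Adj (g x) (g y) ↔ K.Adj x y
  rw [← f.map_adj_iff, hg, hg, e.map_adj_iff]

def SimpleGraph.pathGraph.embeddingAdd {l m : ℕ} (k : ℕ) (h : l + k ≤ m) :
    pathGraph l ↪g pathGraph m where
  toFun i := ⟨i + k, by omega⟩
  inj' i j hij := Fin.ext (by simpa using hij)
  map_rel_iff' {i j} := by
    change (pathGraph m).Adj ⟨i + k, _⟩ ⟨j + k, _⟩ ↔ _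
    simp only [pathGraph_adj]
    omega

lemma hasInducedPathOn_iff {G : SimpleGraph V} {m : ℕ} :
    HasInducedPathOn G m ↔ Nonempty (pathGraph m ↪g G) := by
  constructor
  · rintro ⟨p, hinj, hadj⟩
    exact ⟨⟨⟨p, hinj⟩, fun {i j} => (hadj i j).trans pathGraph_adj.symm⟩⟩
  · rintro ⟨e⟩
    exact ⟨e, e.injective, fun i j => e.map_adj_iff.trans pathGraph_adj⟩

lemma ptFree_top_three : PtFree (⊤ : SimpleGraph V) 3 := by
  rintro ⟨p, hinj, hadj⟩
  have h02 := (hadj 0 2).1 (hinj.ne (by decide))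
  revert h02
  decide

lemma ptFree_bot {m : ℕ} (hm : 2 ≤ m) : PtFree (⊥ : SimpleGraph V) m := by
  rintro ⟨p, -, hadj⟩
  exact (hadj ⟨0, by omega⟩ ⟨1, by omega⟩).2 (Or.inl rfl)

namespace typeA

variable {A B : Type} (H : SimpleGraph A) (H' : SimpleGraph B)

def inlEmbedding : H ↪g typeA H H' := ⟨⟨Sum.inl, Sum.inl_injective⟩, Iff.rfl⟩

def copyEmbedding (a : A) : H' ↪g typeA H H' where
  toFun b := Sum.inr (a, b)
  inj' _ _ h := congrArg Prod.snd (Sum.inr_injective h)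
  map_rel_iff' := and_iff_right rfl

variable {H H'}

lemma eq_inl_or_mem_copy_of_adj {q : A × B} {y : A ⊕ A × B}
    (h : (typeA H H').Adj (Sum.inr q) y) : y = Sum.inl q.1 ∨ ∃ b, y = Sum.inr (q.1, b) := by
  rcases y with a | ⟨a, b⟩
  · exact Or.inl (congrArg Sum.inl h.symm)
  · exact Or.inr ⟨b, by rw [h.1]⟩

lemma anchor_mem_range {m : ℕ} (hH' : PtFree H' m) (e : pathGraph m ↪g typeA H H')
    {i : Fin m} {q : A × B} (hi : e i = Sum.inr q) : Sum.inl q.1 ∈ Set.range e := by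
  by_contra hanchor
  have hcopy : ∀ j, ∃ b, e j = Sum.inr (q.1, b) := by
    refine (pathGraph_preconnected m).forall_of_adj_closed ?_ ⟨q.2, hi⟩
    rintro x y hxy ⟨b, hb⟩
    have hadj := e.map_adj_iff.2 hxy
    rw [hb] at hadj
    exact (eq_inl_or_mem_copy_of_adj hadj).resolve_left fun hy => hanchor ⟨y, hy⟩
  refine hH' (hasInducedPathOn_iff.2 ?_)
  refine (copyEmbedding H H' q.1).nonempty_of_range_subset e ?_
  rintro _ ⟨j, rfl⟩
  obtain ⟨b, hb⟩ := hcopy j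
  exact ⟨b, hb.symm⟩

lemma endpoint_of_adj_anchor {m : ℕ} (e : pathGraph m ↪g typeA H H') {i j : Fin m}
    {q : A × B} (hi : e i = Sum.inr q) (hj : e j = Sum.inl q.1) : i.1 = 0 ∨ i.1 + 1 = m := by
  have hij : (pathGraph m).Adj i j := e.map_adj_iff.1 (by rw [hi, hj]; exact rfl)
  have hnbr : ∀ k, (pathGraph m).Adj i k → k = j ∨ (pathGraph m).Adj k j := by
    intro k hik
    have hadj := e.map_adj_iff.2 hik
    rw [hi] at hadj
    rcases eq_inl_or_mem_copy_of_adj hadj with hk | ⟨b, hk⟩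
    · exact Or.inl (e.injective (hk.trans hj.symm))
    · exact Or.inr (e.map_adj_iff.1 (by rw [hk, hj]; exact rfl))
  by_contra! hinner
  have hprev := hnbr ⟨i - 1, by omega⟩ (pathGraph_adj.2 (Or.inr (by simp only; omega)))
  have hnext := hnbr ⟨i + 1, by omega⟩ (pathGraph_adj.2 (Or.inl rfl))
  simp only [pathGraph_adj, Fin.ext_iff] at hij hprev hnext
  omega

end typeA

lemma typeA_ptFree {A B : Type} (H : SimpleGraph A) (H' : SimpleGraph B) (n : ℕ)
    (hH : PtFree H (n + 1)) (hH' : PtFree H' (n + 3)) : PtFree (typeA H H') (n + 3) := by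
  rintro hpath
  obtain ⟨e⟩ := hasInducedPathOn_iff.1 hpath
  have hinterior : ∀ i : Fin (n + 1), ∃ a, e ⟨i + 1, by omega⟩ = Sum.inl a := by
    intro i
    rcases he : e ⟨i + 1, by omega⟩ with a | q
    · exact ⟨a, rfl⟩
    · obtain ⟨j, hj⟩ := typeA.anchor_mem_range hH' e he
      have hend := typeA.endpoint_of_adj_anchor e he hj
      dsimp only at hend
      omega
  refine hH (hasInducedPathOn_iff.2 ?_)
  refine (typeA.inlEmbedding H H').nonempty_of_range_subset
    (e.comp (pathGraph.embeddingAdd 1 (by omega))) ?_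
  rintro _ ⟨i, rfl⟩
  obtain ⟨a, ha⟩ := hinterior i
  exact ⟨a, ha.symm⟩

/-- `G_{r,k}` is `P_{2r+1}`-free for all `r, k ≥ 1`; here `GrkS r k` is
`G_{r+1, k+1}`, so it has no induced path on `2(r+1)+1` vertices. -/
theorem Grk_ptFree (r k : ℕ) : PtFree (GrkS r k).2 (2 * (r + 1) + 1) := by
  induction r generalizing k with
  | zero => exact ptFree_top_three
  | succ r ih =>
    induction k with
    | zero => exact ptFree_bot (by omega)
    | succ k ihk => exact typeA_ptFree _ _ (2 * r + 2) (ih (k + 1)) ihk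
end
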